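/- arXiv:1701.06897 — 2 statements merged into one kernel-verified Lean document; each statement's English description precedes it below -/
import Mathlib

section
/- There exists a constant C < ∞ such that for all finitely supported sequences (a_m)_{m≥2} and (b_n)_{n≥2} of complex numbers, |∑_{m=2}^∞ ∑_{n=2}^∞ a_m b_n (mn)^{-1/2} (log(mn))^{-2}| ≤ C (∑_{m=2}^∞ |a_m|²/d(m))^{1/2} (∑_{n=2}^∞ |b_n|²/d(n))^{1/2}. (This is the boundedness on 𝒜²₀ × 𝒜²₀ of the form H(fg) = ∫_{1/2}^∞ f(σ)g(σ)(σ−1/2) dσ, using the identity ∫_{1/2}^∞ (mn)^{-σ}(σ−1/2) dσ = (mn)^{-1/2}(log mn)^{-2}.) -/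
/-!
Schur's test with the weights `d(n)` and the test function `q(n) = n^{-1/2} / log n` reduces the
bound to the row estimate `∑_{n ≥ 2} d(n) / (n (L + log n)² log n) ≤ 5 / L` for `L = log m`.
Writing `d(n)` as the number of factorisations `n = c e` and using the symmetry `c ↔ e`, one may
take `e ≤ c`; then the weight of `n` is at most `1/e` times the weight of `c`, the harmonic sum
`∑_{e ≤ c} 1/e ≤ 1 + log c` absorbs the factor `log c`, and what remains is the telescoping sum
`∑_{c ≥ 2} 1 / (c (L + log c)²) ≤ 1 / L`.
-/

open Real Finset

section SchurTest

variable {ι : Type*} {s : Finset ι} {K : ι → ι → ℝ} {μ q : ι → ℝ} {α : ℝ}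

lemma sum_sum_sq_div_mul_le_of_row_bound (hμ : ∀ n ∈ s, 0 < μ n) (hq : ∀ n ∈ s, 0 < q n)
    (hrow : ∀ m ∈ s, ∑ n ∈ s, K m n * (μ n * q n) ≤ α * q m) (x : ι → ℝ) :
    ∑ m ∈ s, ∑ n ∈ s, x m ^ 2 / (μ m * q m) * (K m n * (μ n * q n)) ≤
      α * ∑ m ∈ s, x m ^ 2 / μ m := by
  rw [mul_sum]
  refine sum_le_sum fun m hm => ?_
  have hμm := hμ m hm
  have hqm := hq m hm
  calc ∑ n ∈ s, x m ^ 2 / (μ m * q m) * (K m n * (μ n * q n))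
      ≤ x m ^ 2 / (μ m * q m) * (α * q m) := by
        rw [← mul_sum]; gcongr; exact hrow m hm
    _ = α * (x m ^ 2 / μ m) := by field_simp

theorem sum_sum_mul_le_of_schur_test (hK : ∀ m ∈ s, ∀ n ∈ s, 0 ≤ K m n)
    (hsymm : ∀ m n, K m n = K n m) (hμ : ∀ n ∈ s, 0 < μ n) (hq : ∀ n ∈ s, 0 < q n)
    (hα : 0 ≤ α) (hrow : ∀ m ∈ s, ∑ n ∈ s, K m n * (μ n * q n) ≤ α * q m) (x y : ι → ℝ) :
    ∑ m ∈ s, ∑ n ∈ s, x m * y n * K m n ≤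
      α * √(∑ m ∈ s, x m ^ 2 / μ m) * √(∑ n ∈ s, y n ^ 2 / μ n) := by
  set w : ι → ℝ := fun n => μ n * q n
  have hw : ∀ n ∈ s, 0 < w n := fun n hn => mul_pos (hμ n hn) (hq n hn)
  set f : (ι → ℝ) → ι × ι → ℝ := fun z p => z p.1 * √(K p.1 p.2 * w p.2 / w p.1)
  have hsplit : ∀ m ∈ s, ∀ n ∈ s, x m * y n * K m n = f x (m, n) * f y (n, m) := by
    intro m hm n hn
    have := hw m hm; have := hw n hn; have := hK m hm n hn
    simp only [f, hsymm n m]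
    rw [mul_mul_mul_comm, ← sqrt_mul (by positivity),
      show K m n * w n / w m * (K m n * w m / w n) = K m n ^ 2 by field_simp,
      sqrt_sq (hK m hm n hn)]
  have hsq : ∀ z : ι → ℝ, ∑ p ∈ s ×ˢ s, f z p ^ 2 ≤ α * ∑ m ∈ s, z m ^ 2 / μ m := by
    intro z
    refine le_trans (le_of_eq ?_) (sum_sum_sq_div_mul_le_of_row_bound hμ hq hrow z)
    rw [sum_product]
    refine sum_congr rfl fun m hm => sum_congr rfl fun n hn => ?_
    have := hw m hm; have := hw n hn; have := hK m hm n hn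
    simp only [f, w, mul_pow, sq_sqrt (by positivity : 0 ≤ K m n * w n / w m)]
    ring
  calc ∑ m ∈ s, ∑ n ∈ s, x m * y n * K m n
      = ∑ p ∈ s ×ˢ s, f x p * f y p.swap := by
        rw [sum_product]
        exact sum_congr rfl fun m hm => sum_congr rfl fun n hn => hsplit m hm n hn
    _ ≤ √(∑ p ∈ s ×ˢ s, f x p ^ 2) * √(∑ p ∈ s ×ˢ s, f y p.swap ^ 2) :=
        sum_mul_le_sqrt_mul_sqrt _ _ _
    _ ≤ √(α * ∑ m ∈ s, x m ^ 2 / μ m) * √(α * ∑ n ∈ s, y n ^ 2 / μ n) := by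
        have hswap : ∑ p ∈ s ×ˢ s, f y p.swap ^ 2 = ∑ p ∈ s ×ˢ s, f y p ^ 2 :=
          sum_equiv (Equiv.prodComm ι ι) (by simp [and_comm]) fun _ _ => rfl
        rw [hswap]
        gcongr
        · exact hsq x
        · exact hsq y
    _ = α * √(∑ m ∈ s, x m ^ 2 / μ m) * √(∑ n ∈ s, y n ^ 2 / μ n) := by
        rw [sqrt_mul hα, sqrt_mul hα, ← sq_sqrt hα]
        simp only [sqrt_sq (sqrt_nonneg α)]
        ring

end SchurTest

lemma sum_le_two_mul_sum_filter_snd_le {α : Type*} [LinearOrder α] {s : Finset (α × α)}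
    {f : α × α → ℝ} (hs : ∀ p ∈ s, p.swap ∈ s) (hf : ∀ p, f p.swap = f p)
    (hf0 : ∀ p ∈ s, 0 ≤ f p) :
    ∑ p ∈ s, f p ≤ 2 * ∑ p ∈ s with p.2 ≤ p.1, f p := by
  rw [← sum_filter_add_sum_filter_not s (fun p => p.2 ≤ p.1), two_mul, add_le_add_iff_left]
  calc ∑ p ∈ s with ¬p.2 ≤ p.1, f p
      = ∑ p ∈ (s.filter fun p => ¬p.2 ≤ p.1).map (Equiv.prodComm α α).toEmbedding, f p := by
        rw [sum_map]; exact sum_congr rfl fun p _ => (hf p).symm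
    _ ≤ ∑ p ∈ s with p.2 ≤ p.1, f p := by
        refine sum_le_sum_of_subset_of_nonneg ?_ fun p hp _ => hf0 p (mem_filter.mp hp).1
        intro p hp
        simp only [mem_map, mem_filter, Equiv.coe_toEmbedding, Equiv.prodComm_apply] at hp ⊢
        obtain ⟨p, ⟨hps, hlt⟩, rfl⟩ := hp
        exact ⟨hs p hps, (not_le.mp hlt).le⟩

lemma sum_card_divisors_mul_eq_sum_biUnion (s : Finset ℕ) (h : ℕ → ℝ) :
    ∑ n ∈ s, (n.divisors.card : ℝ) * h n =
      ∑ p ∈ s.biUnion Nat.divisorsAntidiagonal, h (p.1 * p.2) := by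
  rw [sum_biUnion]
  · refine sum_congr rfl fun n _ => ?_
    rw [sum_congr rfl fun p hp => by rw [(Nat.mem_divisorsAntidiagonal.mp hp).1], sum_const,
      nsmul_eq_mul, ← Nat.map_div_right_divisors, card_map]
  · intro n _ n' _ hne
    exact disjoint_left.mpr fun p hp hp' => hne <|
      (Nat.mem_divisorsAntidiagonal.mp hp).1.symm.trans (Nat.mem_divisorsAntidiagonal.mp hp').1

noncomputable def logWeight (L : ℝ) (n : ℕ) : ℝ := ((n : ℝ) * (L + log n) ^ 2 * log n)⁻¹

lemma logWeight_nonneg (L : ℝ) (n : ℕ) : 0 ≤ logWeight L n := by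
  have := log_natCast_nonneg n
  unfold logWeight; positivity

section LogWeight

variable {L : ℝ}

lemma logWeight_mul_le (hL : 0 ≤ L) {c e : ℕ} (hc : 2 ≤ c) (he : 1 ≤ e) :
    logWeight L (c * e) ≤ logWeight L c / e := by
  have hc0 : (0 : ℝ) < log c := log_pos (by exact_mod_cast hc)
  have he1 : (1 : ℝ) ≤ e := by exact_mod_cast he
  have hlog : log c ≤ log ((c : ℝ) * e) :=
    log_le_log (by positivity) (le_mul_of_one_le_right (by positivity) he1)
  rw [logWeight, logWeight, div_eq_mul_inv, ← mul_inv, Nat.cast_mul]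
  apply inv_anti₀ (by positivity)
  calc (c : ℝ) * (L + log c) ^ 2 * log c * e = (c * e) * (L + log c) ^ 2 * log c := by ring
    _ ≤ (c * e) * (L + log (c * e)) ^ 2 * log (c * e) := by gcongr

lemma one_add_log_mul_logWeight_le (hL : 0 ≤ L) {c : ℕ} (hc : 2 ≤ c) :
    (1 + log c) * logWeight L c ≤ 5 / 2 * ((c : ℝ) * (L + log c) ^ 2)⁻¹ := by
  have hlog : log 2 ≤ log c := log_le_log (by norm_num) (by exact_mod_cast hc)
  have hc0 : 0 < log c := lt_of_lt_of_le (log_pos (by norm_num)) hlog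
  have hratio : (1 + log c) / log c ≤ 5 / 2 := by
    rw [div_le_iff₀ hc0]; linarith [log_two_gt_d9]
  calc (1 + log c) * logWeight L c = (1 + log c) / log c * ((c : ℝ) * (L + log c) ^ 2)⁻¹ := by
        rw [logWeight, mul_inv, div_eq_mul_inv]; ring
    _ ≤ 5 / 2 * ((c : ℝ) * (L + log c) ^ 2)⁻¹ := by gcongr

lemma inv_mul_add_log_sq_le_sub (hL : 0 < L) {x : ℝ} (hx : 1 ≤ x) :
    ((x + 1) * (L + log (x + 1)) ^ 2)⁻¹ ≤ (L + log x)⁻¹ - (L + log (x + 1))⁻¹ := by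
  have hA : 0 < L + log x := by linarith [log_nonneg hx]
  have hAB : L + log x ≤ L + log (x + 1) := by gcongr; linarith
  have hstep : (x + 1)⁻¹ ≤ (L + log (x + 1)) - (L + log x) := by
    have h := one_sub_inv_le_log_of_pos (x := (x + 1) / x) (by positivity)
    rw [log_div (by positivity) (by positivity), inv_div,
      show 1 - x / (x + 1) = (x + 1)⁻¹ by field_simp; ring] at h
    linarith
  rw [inv_sub_inv hA.ne' (by linarith), mul_inv]
  calc (x + 1)⁻¹ * ((L + log (x + 1)) ^ 2)⁻¹
      ≤ ((L + log (x + 1)) - (L + log x)) * ((L + log x) * (L + log (x + 1)))⁻¹ := by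
        have hB : 0 < L + log (x + 1) := hA.trans_le hAB
        gcongr
        rw [sq]; gcongr
    _ = _ := by rw [div_eq_mul_inv]

lemma sum_Icc_inv_mul_add_log_sq_le (hL : 0 < L) (N : ℕ) :
    ∑ c ∈ Icc 2 N, ((c : ℝ) * (L + log c) ^ 2)⁻¹ ≤ L⁻¹ := by
  suffices h : ∑ c ∈ Icc 2 N, ((c : ℝ) * (L + log c) ^ 2)⁻¹ ≤ L⁻¹ - (L + log N)⁻¹ by
    have : 0 ≤ (L + log N)⁻¹ := by have := log_natCast_nonneg N; positivity
    linarith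
  induction N with
  | zero => simp
  | succ n ih =>
    rcases Nat.lt_or_ge n 1 with hn | hn
    · interval_cases n; simp
    rw [sum_Icc_succ_top (by omega)]
    have := inv_mul_add_log_sq_le_sub hL (x := n) (by exact_mod_cast hn)
    push_cast
    linarith

theorem sum_card_divisors_mul_logWeight_le (hL : 0 < L) (N : ℕ) :
    ∑ n ∈ Icc 2 N, (n.divisors.card : ℝ) * logWeight L n ≤ 5 / L := by
  set S := (Icc 2 N).biUnion Nat.divisorsAntidiagonal
  have hS : ∀ p ∈ S, p.1 * p.2 ∈ Icc 2 N := by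
    intro p hp
    obtain ⟨n, hn, hp⟩ := mem_biUnion.mp hp
    rwa [(Nat.mem_divisorsAntidiagonal.mp hp).1]
  have hT : ∀ p ∈ S, p.2 ≤ p.1 → p.1 ∈ Icc 2 N ∧ p.2 ∈ Icc 1 p.1 := by
    intro p hp hle
    obtain ⟨h2, hN⟩ := mem_Icc.mp (hS p hp)
    have he : 1 ≤ p.2 := Nat.pos_of_ne_zero fun h => by simp [h] at h2
    simp only [mem_Icc]
    refine ⟨⟨?_, ?_⟩, he, hle⟩ <;> nlinarith
  calc ∑ n ∈ Icc 2 N, (n.divisors.card : ℝ) * logWeight L n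
      = ∑ p ∈ S, logWeight L (p.1 * p.2) := sum_card_divisors_mul_eq_sum_biUnion _ _
    _ ≤ 2 * ∑ p ∈ S with p.2 ≤ p.1, logWeight L (p.1 * p.2) := by
        refine sum_le_two_mul_sum_filter_snd_le (fun p hp => ?_) (fun p => ?_)
          fun p _ => logWeight_nonneg _ _
        · obtain ⟨n, hn, hp⟩ := mem_biUnion.mp hp
          exact mem_biUnion.mpr ⟨n, hn, Nat.swap_mem_divisorsAntidiagonal.mpr hp⟩
        · rw [Prod.fst_swap, Prod.snd_swap, mul_comm]
    _ ≤ 2 * ∑ p ∈ S with p.2 ≤ p.1, logWeight L p.1 / p.2 := by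
        gcongr with p hp
        obtain ⟨hp, hle⟩ := mem_filter.mp hp
        obtain ⟨hc, he⟩ := hT p hp hle
        exact logWeight_mul_le hL.le (mem_Icc.mp hc).1 (mem_Icc.mp he).1
    _ ≤ 2 * ∑ c ∈ Icc 2 N, ∑ e ∈ Icc 1 c, logWeight L c / e := by
        rw [← sum_finset_product' ((Icc 2 N ×ˢ Icc 1 N).filter fun p => p.2 ≤ p.1) _ _
          fun p => by simp only [mem_filter, mem_product, mem_Icc]; omega]
        gcongr 2 * ?_
        refine sum_le_sum_of_subset_of_nonneg (fun p hp => ?_)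
          fun p _ _ => div_nonneg (logWeight_nonneg _ _) (Nat.cast_nonneg _)
        obtain ⟨hp, hle⟩ := mem_filter.mp hp
        obtain ⟨hc, he⟩ := hT p hp hle
        simp only [mem_filter, mem_product, mem_Icc] at hc he ⊢
        omega
    _ = 2 * ∑ c ∈ Icc 2 N, (∑ e ∈ Icc 1 c, (e : ℝ)⁻¹) * logWeight L c := by
        simp only [div_eq_mul_inv, ← mul_sum, mul_comm]
    _ ≤ 2 * ∑ c ∈ Icc 2 N, (1 + log c) * logWeight L c := by
        gcongr with c
        · exact logWeight_nonneg _ _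
        · simpa [harmonic_eq_sum_Icc] using harmonic_le_one_add_log c
    _ ≤ 2 * ∑ c ∈ Icc 2 N, 5 / 2 * ((c : ℝ) * (L + log c) ^ 2)⁻¹ := by
        gcongr 2 * ?_
        exact sum_le_sum fun c hc => one_add_log_mul_logWeight_le hL.le (mem_Icc.mp hc).1
    _ = 5 * ∑ c ∈ Icc 2 N, ((c : ℝ) * (L + log c) ^ 2)⁻¹ := by rw [← mul_sum]; ring
    _ ≤ 5 * L⁻¹ := by gcongr; exact sum_Icc_inv_mul_add_log_sq_le hL N
    _ = 5 / L := (div_eq_mul_inv _ _).symm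

end LogWeight

noncomputable def hankelKernel (m n : ℕ) : ℝ :=
  ((m * n : ℕ) : ℝ) ^ (-(1 / 2 : ℝ)) * log ((m * n : ℕ) : ℝ) ^ (-(2 : ℝ))

noncomputable def schurWeight (n : ℕ) : ℝ := (n : ℝ) ^ (-(1 / 2 : ℝ)) / log n

lemma hankelKernel_nonneg (m n : ℕ) : 0 ≤ hankelKernel m n := by
  have := log_natCast_nonneg (m * n)
  unfold hankelKernel; positivity

lemma hankelKernel_comm (m n : ℕ) : hankelKernel m n = hankelKernel n m := by
  rw [hankelKernel, hankelKernel, mul_comm m n]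

lemma schurWeight_pos {n : ℕ} (hn : 2 ≤ n) : 0 < schurWeight n := by
  have : 0 < log n := log_pos (by exact_mod_cast hn)
  unfold schurWeight; positivity

lemma hankelKernel_mul_schurWeight {m n : ℕ} (hm : 2 ≤ m) (hn : 2 ≤ n) :
    hankelKernel m n * schurWeight n = (m : ℝ) ^ (-(1 / 2 : ℝ)) * logWeight (log m) n := by
  have hm0 : (0 : ℝ) < m := by positivity
  have hn0 : (0 : ℝ) < n := by positivity
  have hsum : 0 < log m + log n := by
    have := log_pos (show (1 : ℝ) < m by exact_mod_cast hm)
    have := log_pos (show (1 : ℝ) < n by exact_mod_cast hn)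
    linarith
  have hhalf : (n : ℝ) ^ (-(1 / 2 : ℝ)) * (n : ℝ) ^ (-(1 / 2 : ℝ)) = (n : ℝ)⁻¹ := by
    rw [← rpow_add hn0]; norm_num [rpow_neg_one]
  rw [hankelKernel, schurWeight, logWeight, Nat.cast_mul, mul_rpow hm0.le hn0.le,
    log_mul hm0.ne' hn0.ne', rpow_neg hsum.le, rpow_two, mul_inv, mul_inv, ← hhalf]
  ring

lemma sum_hankelKernel_mul_le {m : ℕ} (hm : 2 ≤ m) (N : ℕ) :
    ∑ n ∈ Icc 2 N, hankelKernel m n * ((n.divisors.card : ℝ) * schurWeight n) ≤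
      5 * schurWeight m := by
  have hL : 0 < log m := log_pos (by exact_mod_cast hm)
  calc ∑ n ∈ Icc 2 N, hankelKernel m n * ((n.divisors.card : ℝ) * schurWeight n)
      = (m : ℝ) ^ (-(1 / 2 : ℝ)) * ∑ n ∈ Icc 2 N, (n.divisors.card : ℝ) * logWeight (log m) n := by
        rw [mul_sum]
        refine sum_congr rfl fun n hn => ?_
        rw [mul_left_comm, hankelKernel_mul_schurWeight hm (mem_Icc.mp hn).1]
        ring
    _ ≤ (m : ℝ) ^ (-(1 / 2 : ℝ)) * (5 / log m) := by
        gcongr; exact sum_card_divisors_mul_logWeight_le hL N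
    _ = 5 * schurWeight m := by rw [schurWeight]; ring

lemma norm_sum_sum_mul_ofReal_le {ι : Type*} (s t : Finset ι) (a b : ι → ℂ) {K : ι → ι → ℝ}
    (hK : ∀ m n, 0 ≤ K m n) :
    ‖∑ m ∈ s, ∑ n ∈ t, a m * b n * (K m n : ℂ)‖ ≤ ∑ m ∈ s, ∑ n ∈ t, ‖a m‖ * ‖b n‖ * K m n := by
  refine (norm_sum_le _ _).trans (sum_le_sum fun m _ => (norm_sum_le _ _).trans_eq ?_)
  refine sum_congr rfl fun n _ => ?_
  rw [norm_mul, norm_mul, Complex.norm_real, norm_of_nonneg (hK m n)]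

/-- Boundedness of the multiplicative Hilbert-type Hankel form on `𝒜²₀ × 𝒜²₀`:
there is a constant `C` such that for all finitely supported coefficient
sequences, `|∑_{m,n≥2} a_m b_n (mn)^{-1/2} (log mn)^{-2}|
  ≤ C (∑ |a_m|²/d(m))^{1/2} (∑ |b_n|²/d(n))^{1/2}`,
where `d(n)` is the number of divisors of `n`. -/
theorem statement11 :
    ∃ C : ℝ, ∀ (N : ℕ) (a b : ℕ → ℂ),
      ‖(∑ m ∈ Finset.Icc 2 N, ∑ n ∈ Finset.Icc 2 N,
          a m * b n *
            ((((m * n : ℕ) : ℝ) ^ (-(1 / 2 : ℝ)) * Real.log ((m * n : ℕ) : ℝ) ^ (-(2 : ℝ)) : ℝ) : ℂ))‖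
        ≤ C * Real.sqrt (∑ m ∈ Finset.Icc 2 N, ‖a m‖ ^ 2 / (m.divisors.card : ℝ)) *
            Real.sqrt (∑ n ∈ Finset.Icc 2 N, ‖b n‖ ^ 2 / (n.divisors.card : ℝ)) := by
  refine ⟨5, fun N a b => ?_⟩
  have hcard : ∀ n ∈ Icc 2 N, (0 : ℝ) < n.divisors.card := fun n hn => by
    exact_mod_cast card_pos.mpr ⟨1, Nat.one_mem_divisors.mpr (by grind)⟩
  calc _ ≤ ∑ m ∈ Icc 2 N, ∑ n ∈ Icc 2 N, ‖a m‖ * ‖b n‖ * hankelKernel m n :=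
        norm_sum_sum_mul_ofReal_le _ _ a b hankelKernel_nonneg
    _ ≤ _ := sum_sum_mul_le_of_schur_test (fun m _ n _ => hankelKernel_nonneg m n)
        hankelKernel_comm hcard (fun n hn => schurWeight_pos (mem_Icc.mp hn).1) (by norm_num)
        (fun m hm => sum_hankelKernel_mul_le (mem_Icc.mp hm).1 N) _ _
end

section
/- For every real α with 1 < α < 2, the series ∑_{n=2}^∞ d(n) α^{Ω(n)} / (n (log n)⁴) converges, where d(n) is the number of divisors of n and Ω(n) is the number of prime factors of n counted with multiplicity. -/
/-!
Since `(log n)⁻ᵏ = Γ(k)⁻¹ ∫₀^∞ tᵏ⁻¹ n^(-t) dt` and `n^(-1-t) ≤ 2^(-t/2) n^(-σ)` for `σ = 1 + t/2`,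
it suffices to bound `∑ d(n) α^Ω(n) n^(-σ)` by `O((σ - 1)^(-2α))`: the integrand is then
`O(t^(k-1-2α))` near `0`, integrable for `k = 4` exactly because `α < 2`. For the completely
multiplicative `f(n) = α^Ω(n) n^(-σ)` we have `d(n) f(n) = ∑_{ab=n} f(a) f(b)`, so that series is
at most `(∑ f(n))²`, and the Euler product `∏_p (1 - α p^(-σ))⁻¹` is at most
`ζ(σ)^α exp(C ∑_p p^(-2σ))` with `ζ(σ) ≤ σ / (σ - 1)`.
-/

open Real Finset MeasureTheory
open scoped ArithmeticFunction.Omega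

section CompletelyMultiplicative

variable {f : ℕ →* ℝ}

theorem hasSum_indicator_smoothNumbers (hf : ∀ n, 0 ≤ f n) (hfp : ∀ p, p.Prime → f p < 1)
    (N : ℕ) : HasSum (N.smoothNumbers.indicator f) (∏ p ∈ N.primesBelow, (1 - f p)⁻¹) := by
  have hnorm {p : ℕ} (hp : p.Prime) : ‖f p‖ < 1 := by
    rw [Real.norm_of_nonneg (hf p)]
    exact hfp p hp
  exact hasSum_subtype_iff_indicator.mp
    (EulerProduct.summable_and_hasSum_smoothNumbers_prod_primesBelow_geometric hnorm N).2

theorem sum_le_prod_primesBelow_inv_one_sub (hf : ∀ n, 0 ≤ f n) (hfp : ∀ p, p.Prime → f p < 1)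
    {E : Finset ℕ} {N : ℕ} (hE : ∀ n ∈ E, n < N) :
    ∑ n ∈ E, f n ≤ ∏ p ∈ N.primesBelow, (1 - f p)⁻¹ := by
  -- `f 0 = f 0 * f 2` with `f 2 < 1`
  have hf0 : f 0 = 0 := by
    have h := map_mul f 0 2
    rw [zero_mul] at h
    nlinarith [hf 0, hfp 2 Nat.prime_two]
  have hind : ∀ n, 0 ≤ N.smoothNumbers.indicator f n :=
    fun n => Set.indicator_nonneg (fun m _ => hf m) n
  refine (sum_le_sum fun n hn => ?_).trans
    (sum_le_hasSum E (fun n _ => hind n) (hasSum_indicator_smoothNumbers hf hfp N))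
  rcases Nat.eq_zero_or_pos n with rfl | hn0
  · exact hf0.trans_le (hind 0)
  · rw [Set.indicator_of_mem (Nat.mem_smoothNumbers_of_lt hn0 (hE n hn))]

theorem prod_primesBelow_inv_one_sub_le_tsum (hf : ∀ n, 0 ≤ f n)
    (hfp : ∀ p, p.Prime → f p < 1) (hs : Summable f) (N : ℕ) :
    ∏ p ∈ N.primesBelow, (1 - f p)⁻¹ ≤ ∑' n, f n :=
  hasSum_le (Set.indicator_le_self' fun n _ => hf n) (hasSum_indicator_smoothNumbers hf hfp N)
    hs.hasSum

theorem card_divisors_mul_eq_sum_divisorsAntidiagonal (n : ℕ) :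
    (n.divisors.card : ℝ) * f n = ∑ x ∈ n.divisorsAntidiagonal, f x.1 * f x.2 := by
  rw [Nat.sum_divisorsAntidiagonal (fun a b => f a * f b), ← nsmul_eq_mul, ← sum_const]
  refine sum_congr rfl fun d hd => ?_
  rw [← map_mul, Nat.mul_div_cancel' (Nat.dvd_of_mem_divisors hd)]

theorem sum_card_divisors_mul_le_sq (hf : ∀ n, 0 ≤ f n) (F : Finset ℕ) :
    ∑ n ∈ F, (n.divisors.card : ℝ) * f n ≤ (∑ m ∈ F.biUnion Nat.divisors, f m) ^ 2 := by
  set D := F.biUnion Nat.divisors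
  have hdisj : (F : Set ℕ).PairwiseDisjoint Nat.divisorsAntidiagonal := by
    intro a _ b _ hab
    refine Finset.disjoint_left.mpr fun x hxa hxb => hab ?_
    rw [← (Nat.mem_divisorsAntidiagonal.mp hxa).1, (Nat.mem_divisorsAntidiagonal.mp hxb).1]
  have hsub : F.biUnion Nat.divisorsAntidiagonal ⊆ D ×ˢ D := by
    intro x hx
    obtain ⟨n, hn, hxn⟩ := mem_biUnion.mp hx
    exact mem_product.mpr
      ⟨mem_biUnion.mpr ⟨n, hn, Nat.fst_mem_divisors_of_mem_antidiagonal hxn⟩,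
        mem_biUnion.mpr ⟨n, hn, Nat.snd_mem_divisors_of_mem_antidiagonal hxn⟩⟩
  calc ∑ n ∈ F, (n.divisors.card : ℝ) * f n
      = ∑ x ∈ F.biUnion Nat.divisorsAntidiagonal, f x.1 * f x.2 := by
        rw [sum_biUnion hdisj]
        exact sum_congr rfl fun n _ => card_divisors_mul_eq_sum_divisorsAntidiagonal n
    _ ≤ ∑ x ∈ D ×ˢ D, f x.1 * f x.2 :=
        sum_le_sum_of_subset_of_nonneg hsub fun x _ _ => mul_nonneg (hf _) (hf _)
    _ = (∑ m ∈ D, f m) ^ 2 := by rw [sum_product, ← sum_mul_sum, sq]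

end CompletelyMultiplicative

theorem inv_one_sub_mul_le_rpow_mul_exp {α u : ℝ} (hα0 : 0 ≤ α) (hα2 : α < 2)
    (hu : u ≤ 1 / 2) :
    (1 - α * u)⁻¹ ≤ (1 - u)⁻¹ ^ α * exp (α ^ 2 / (1 - α / 2) * u ^ 2) := by
  have hαu : 1 - α / 2 ≤ 1 - α * u := by nlinarith
  have hα2' : 0 < 1 - α / 2 := by linarith
  have hαu' : 0 < 1 - α * u := hα2'.trans_le hαu
  have h1u : 0 < 1 - u := by linarith
  rw [← exp_log (inv_pos.2 hαu'), rpow_def_of_pos (inv_pos.2 h1u), ← exp_add, exp_le_exp]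
  have hlog_αu : log (1 - α * u)⁻¹ ≤ (1 - α * u)⁻¹ - 1 := log_le_sub_one_of_pos (inv_pos.2 hαu')
  have hlog_u : u ≤ log (1 - u)⁻¹ := by
    rw [log_inv]
    linarith [log_le_sub_one_of_pos h1u]
  have hgeom : (1 - α * u)⁻¹ - 1 = α * u + (α * u) ^ 2 / (1 - α * u) := by
    field_simp [hαu'.ne']
    ring
  have hsq : (α * u) ^ 2 / (1 - α * u) ≤ α ^ 2 / (1 - α / 2) * u ^ 2 := by
    rw [div_mul_eq_mul_div, ← mul_pow]
    exact div_le_div_of_nonneg_left (sq_nonneg _) hα2' hαu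
  nlinarith

theorem rpow_neg_le_half_of_prime {p : ℕ} (hp : p.Prime) {σ : ℝ} (hσ : 1 ≤ σ) :
    (p : ℝ) ^ (-σ) ≤ 1 / 2 := by
  have hp2 : (2 : ℝ) ≤ p := by exact_mod_cast hp.two_le
  calc (p : ℝ) ^ (-σ) ≤ (p : ℝ) ^ (-1 : ℝ) :=
        rpow_le_rpow_of_exponent_le (by linarith) (by linarith)
    _ = (p : ℝ)⁻¹ := rpow_neg_one _
    _ ≤ 1 / 2 := by rw [one_div]; exact inv_anti₀ two_pos hp2

theorem tsum_nat_rpow_neg_le {σ : ℝ} (hσ : 1 < σ) :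
    ∑' n : ℕ, (n : ℝ) ^ (-σ) ≤ σ / (σ - 1) := by
  have hσ0 : 0 < σ := by linarith
  -- `termTSum σ = 1 / (σ - 1) - ζ(σ) / σ` is a sum of nonnegative integrals
  have hrem : 0 ≤ ZetaAsymptotics.termTSum σ :=
    tsum_nonneg fun n => ZetaAsymptotics.term_nonneg (n + 1) σ
  rw [ZetaAsymptotics.termTSum_of_lt hσ] at hrem
  have hζ : ∑' n : ℕ, (n : ℝ) ^ (-σ) = ∑' n : ℕ, 1 / ((n : ℝ) + 1) ^ σ := by
    rw [(summable_nat_rpow.mpr (by linarith)).tsum_eq_zero_add, Nat.cast_zero,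
      zero_rpow (neg_ne_zero.mpr hσ0.ne'), zero_add]
    exact tsum_congr fun n => by rw [Nat.cast_succ, rpow_neg (by positivity), one_div]
  have h := mul_le_mul_of_nonneg_left (sub_nonneg.mp hrem) hσ0.le
  rw [hζ]
  rwa [← mul_assoc, mul_one_div_cancel hσ0.ne', one_mul, ← div_eq_mul_one_div] at h

theorem sum_primesBelow_rpow_neg_sq_le_one {σ : ℝ} (hσ : 1 ≤ σ) (N : ℕ) :
    ∑ p ∈ N.primesBelow, ((p : ℝ) ^ (-σ)) ^ 2 ≤ 1 := by
  have hsub : N.primesBelow ⊆ Ioo 1 N := fun p hp =>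
    mem_Ioo.mpr ⟨(Nat.prime_of_mem_primesBelow hp).one_lt, Nat.lt_of_mem_primesBelow hp⟩
  calc ∑ p ∈ N.primesBelow, ((p : ℝ) ^ (-σ)) ^ 2
      ≤ ∑ p ∈ N.primesBelow, ((p : ℝ) ^ 2)⁻¹ := by
        refine sum_le_sum fun p hp => ?_
        have hp1 : (1 : ℝ) ≤ p := by exact_mod_cast (Nat.prime_of_mem_primesBelow hp).one_lt.le
        rw [← rpow_natCast, ← rpow_mul (by positivity), ← rpow_natCast, ← rpow_neg (by positivity)]
        exact rpow_le_rpow_of_exponent_le hp1 (by push_cast; linarith)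
    _ ≤ ∑ i ∈ Ioo 1 N, ((i : ℝ) ^ 2)⁻¹ :=
        sum_le_sum_of_subset_of_nonneg hsub fun _ _ _ => by positivity
    _ ≤ 1 := by simpa [one_add_one_eq_two] using sum_Ioo_inv_sq_le (α := ℝ) 1 N

/-- The exponent must be nonzero for `0 ↦ 0`, as `0 ^ 0 = 1`. -/
noncomputable def cardFactorsWeight (α σ : ℝ) (hσ : σ ≠ 0) : ℕ →* ℝ where
  toFun n := α ^ Ω n * (n : ℝ) ^ (-σ)
  map_one' := by simp
  map_mul' m n := by
    rcases eq_or_ne m 0 with rfl | hm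
    · simp [zero_rpow (neg_ne_zero.mpr hσ)]
    rcases eq_or_ne n 0 with rfl | hn
    · simp [zero_rpow (neg_ne_zero.mpr hσ)]
    rw [ArithmeticFunction.cardFactors_mul hm hn, pow_add, Nat.cast_mul,
      mul_rpow (Nat.cast_nonneg m) (Nat.cast_nonneg n)]
    ring

namespace cardFactorsWeight

variable {α σ : ℝ} {hσ : σ ≠ 0}

@[simp]
theorem apply (n : ℕ) : cardFactorsWeight α σ hσ n = α ^ Ω n * (n : ℝ) ^ (-σ) := rfl

theorem apply_prime {p : ℕ} (hp : p.Prime) :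
    cardFactorsWeight α σ hσ p = α * (p : ℝ) ^ (-σ) := by
  rw [apply, ArithmeticFunction.cardFactors_apply_prime hp, pow_one]

theorem nonneg (hα : 0 ≤ α) (n : ℕ) : 0 ≤ cardFactorsWeight α σ hσ n := by
  rw [apply]
  positivity

theorem apply_prime_lt_one (hα : α < 2) (hσ1 : 1 ≤ σ) {p : ℕ} (hp : p.Prime) :
    cardFactorsWeight α σ hσ p < 1 := by
  have hu : 0 < (p : ℝ) ^ (-σ) := rpow_pos_of_pos (by exact_mod_cast hp.pos) _
  rw [apply_prime hp]
  nlinarith [rpow_neg_le_half_of_prime hp hσ1, mul_pos (sub_pos.2 hα) hu]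

end cardFactorsWeight

theorem prod_primesBelow_inv_one_sub_rpow_neg_le {σ : ℝ} (hσ : 1 < σ) (N : ℕ) :
    ∏ p ∈ N.primesBelow, (1 - (p : ℝ) ^ (-σ))⁻¹ ≤ σ / (σ - 1) := by
  have hσ0 : σ ≠ 0 := by positivity
  have h := prod_primesBelow_inv_one_sub_le_tsum (f := cardFactorsWeight 1 σ hσ0)
    (cardFactorsWeight.nonneg zero_le_one) (fun p => cardFactorsWeight.apply_prime_lt_one
      one_lt_two hσ.le) ((summable_nat_rpow.mpr (by linarith : -σ < -1)).congr fun n => by simp) N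
  simp only [cardFactorsWeight.apply, one_pow, one_mul] at h
  exact h.trans (tsum_nat_rpow_neg_le hσ)

theorem sum_pow_cardFactors_mul_rpow_neg_le {α σ : ℝ} (hα0 : 0 ≤ α) (hα2 : α < 2) (hσ : 1 < σ)
    (E : Finset ℕ) :
    ∑ n ∈ E, α ^ Ω n * (n : ℝ) ^ (-σ) ≤ (σ / (σ - 1)) ^ α * exp (α ^ 2 / (1 - α / 2)) := by
  have hσ0 : σ ≠ 0 := by positivity
  set C := α ^ 2 / (1 - α / 2)
  have hC : 0 ≤ C := div_nonneg (sq_nonneg α) (by linarith)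
  obtain ⟨N, hN⟩ : ∃ N, ∀ n ∈ E, n < N :=
    ⟨E.sup id + 1, fun n hn => Nat.lt_succ_of_le (le_sup (f := id) hn)⟩
  have hu {p : ℕ} (hp : p ∈ N.primesBelow) : (p : ℝ) ^ (-σ) ≤ 1 / 2 :=
    rpow_neg_le_half_of_prime (Nat.prime_of_mem_primesBelow hp) hσ.le
  have hfactor {p : ℕ} (hp : p ∈ N.primesBelow) : 0 ≤ (1 - (p : ℝ) ^ (-σ))⁻¹ := by
    rw [inv_nonneg]
    linarith [hu hp]
  calc ∑ n ∈ E, α ^ Ω n * (n : ℝ) ^ (-σ)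
      = ∑ n ∈ E, cardFactorsWeight α σ hσ0 n := rfl
    _ ≤ ∏ p ∈ N.primesBelow, (1 - cardFactorsWeight α σ hσ0 p)⁻¹ :=
        sum_le_prod_primesBelow_inv_one_sub (cardFactorsWeight.nonneg hα0)
          (fun p => cardFactorsWeight.apply_prime_lt_one hα2 hσ.le) hN
    _ ≤ ∏ p ∈ N.primesBelow, ((1 - (p : ℝ) ^ (-σ))⁻¹ ^ α * exp (C * ((p : ℝ) ^ (-σ)) ^ 2)) := by
        refine prod_le_prod (fun p hp => ?_) fun p hp => ?_
        · exact inv_nonneg.mpr (sub_nonneg.mpr (cardFactorsWeight.apply_prime_lt_one hα2 hσ.le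
            (Nat.prime_of_mem_primesBelow hp)).le)
        · rw [cardFactorsWeight.apply_prime (Nat.prime_of_mem_primesBelow hp)]
          exact inv_one_sub_mul_le_rpow_mul_exp hα0 hα2 (hu hp)
    _ = (∏ p ∈ N.primesBelow, (1 - (p : ℝ) ^ (-σ))⁻¹) ^ α *
          exp (C * ∑ p ∈ N.primesBelow, ((p : ℝ) ^ (-σ)) ^ 2) := by
        rw [prod_mul_distrib, finsetProd_rpow _ _ fun p hp => hfactor hp, mul_sum, exp_sum]
    _ ≤ (σ / (σ - 1)) ^ α * exp C := by
        gcongr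
        · exact prod_nonneg fun p hp => hfactor hp
        · exact prod_primesBelow_inv_one_sub_rpow_neg_le hσ N
        · exact mul_le_of_le_one_right hC (sum_primesBelow_rpow_neg_sq_le_one hσ.le N)

theorem sum_card_divisors_mul_pow_cardFactors_mul_rpow_neg_le {α σ : ℝ} (hα0 : 0 ≤ α)
    (hα2 : α < 2) (hσ : 1 < σ) (F : Finset ℕ) :
    ∑ n ∈ F, (n.divisors.card : ℝ) * α ^ Ω n * (n : ℝ) ^ (-σ) ≤
      exp (α ^ 2 / (1 - α / 2)) ^ 2 * (σ / (σ - 1)) ^ (2 * α) := by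
  have hσ0 : σ ≠ 0 := by positivity
  have h := sum_card_divisors_mul_le_sq (cardFactorsWeight.nonneg (hσ := hσ0) hα0) F
  simp only [cardFactorsWeight.apply, ← mul_assoc] at h
  calc _ ≤ _ := h
    _ ≤ ((σ / (σ - 1)) ^ α * exp (α ^ 2 / (1 - α / 2))) ^ 2 := by
        gcongr
        exact sum_pow_cardFactors_mul_rpow_neg_le hα0 hα2 hσ _
    _ = _ := by
        have : 0 ≤ σ / (σ - 1) := div_nonneg (by linarith) (by linarith)
        rw [mul_pow, mul_comm, mul_comm 2 α, rpow_mul this, rpow_two]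

theorem integrableOn_rpow_mul_exp_neg_mul {s r : ℝ} (hs : -1 < s) (hr : 0 < r) :
    IntegrableOn (fun t : ℝ => t ^ s * exp (-r * t)) (Set.Ioi 0) := by
  simpa using integrableOn_rpow_mul_exp_neg_mul_rpow hs one_pos hr

theorem integrableOn_rpow_mul_rpow_neg {s x : ℝ} (hs : -1 < s) (hx : 1 < x) :
    IntegrableOn (fun t : ℝ => t ^ s * x ^ (-t)) (Set.Ioi 0) := by
  refine (integrableOn_rpow_mul_exp_neg_mul hs (log_pos hx)).congr_fun (fun t _ => ?_)
    measurableSet_Ioi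
  dsimp only
  rw [rpow_def_of_pos (by linarith : 0 < x), neg_mul, mul_neg]

theorem integral_rpow_mul_rpow_neg {s x : ℝ} (hs : 0 < s) (hx : 1 < x) :
    ∫ t in Set.Ioi 0, t ^ (s - 1) * x ^ (-t) = Gamma s / log x ^ s := by
  have hlog := log_pos hx
  calc ∫ t in Set.Ioi 0, t ^ (s - 1) * x ^ (-t)
      = ∫ t in Set.Ioi 0, t ^ (s - 1) * exp (-(log x * t)) :=
        setIntegral_congr_fun measurableSet_Ioi fun t _ => by
          rw [rpow_def_of_pos (by linarith : 0 < x), mul_neg]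
    _ = Gamma s / log x ^ s := by
        rw [integral_rpow_mul_exp_neg_mul_Ioi hs hlog, one_div, inv_rpow hlog.le, inv_mul_eq_div]

theorem rpow_mul_add_div_rpow_le {a β c t : ℝ} (hβ : 0 ≤ β) (hc : 0 ≤ c) (ht : 0 < t) :
    t ^ (a - 1) * ((t + c) / t) ^ β ≤ (1 + c) ^ β * (t ^ (a - 1) + t ^ (a - β - 1)) := by
  have h1 : 0 ≤ t ^ (a - 1) := by positivity
  have h2 : 0 ≤ t ^ (a - β - 1) := by positivity
  have hcβ : 0 ≤ (1 + c) ^ β := by positivity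
  rcases le_or_gt 1 t with ht1 | ht1
  · have : (t + c) / t ≤ 1 + c := by
      rw [div_le_iff₀ ht]
      nlinarith
    calc t ^ (a - 1) * ((t + c) / t) ^ β ≤ t ^ (a - 1) * (1 + c) ^ β := by gcongr
      _ ≤ _ := by nlinarith
  · have : (t + c) / t ≤ (1 + c) / t := by gcongr
    calc t ^ (a - 1) * ((t + c) / t) ^ β ≤ t ^ (a - 1) * ((1 + c) / t) ^ β := by gcongr
      _ = (1 + c) ^ β * t ^ (a - β - 1) := by
          rw [div_rpow (by linarith) ht.le, div_eq_mul_inv, ← rpow_neg ht.le,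
            show a - β - 1 = (a - 1) + -β by ring, rpow_add ht]
          ring
      _ ≤ _ := by nlinarith

theorem integrableOn_rpow_mul_add_div_rpow_mul_exp {a β c r : ℝ} (hβ : 0 ≤ β) (hβa : β < a)
    (hc : 0 ≤ c) (hr : 0 < r) :
    IntegrableOn (fun t : ℝ => t ^ (a - 1) * ((t + c) / t) ^ β * exp (-r * t)) (Set.Ioi 0) := by
  have hg := ((integrableOn_rpow_mul_exp_neg_mul (by linarith : -1 < a - 1) hr).add
    (integrableOn_rpow_mul_exp_neg_mul (by linarith : -1 < a - β - 1) hr)).const_mul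
      ((1 + c) ^ β)
  refine hg.mono' ?_ ((ae_restrict_iff' measurableSet_Ioi).mpr (.of_forall fun t ht => ?_))
  · have h0 : ∀ t ∈ Set.Ioi (0 : ℝ), t ≠ 0 := fun t ht => ht.ne'
    refine ContinuousOn.aestronglyMeasurable ?_ measurableSet_Ioi
    exact ((continuousOn_id.rpow_const fun t ht => .inl (h0 t ht)).mul
      (((continuousOn_id.add continuousOn_const).div continuousOn_id h0).rpow_const
        fun _ _ => .inr hβ)).mul (by fun_prop)
  · have ht : 0 < t := ht
    rw [norm_of_nonneg (by positivity)]
    have := rpow_mul_add_div_rpow_le (a := a) hβ hc ht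
    calc _ ≤ (1 + c) ^ β * (t ^ (a - 1) + t ^ (a - β - 1)) * exp (-r * t) := by gcongr
      _ = _ := by simp only [Pi.add_apply]; ring

section MellinCriterion

variable {a : ℕ → ℝ} {C β : ℝ}

theorem sum_div_mul_rpow_neg_le (ha : ∀ n, 0 ≤ a n)
    (hbound : ∀ σ, 1 < σ → ∀ F : Finset ℕ,
      ∑ n ∈ F, a n * (n : ℝ) ^ (-σ) ≤ C * (σ / (σ - 1)) ^ β)
    {F : Finset ℕ} (hF : ∀ n ∈ F, 2 ≤ n) {t : ℝ} (ht : 0 < t) :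
    ∑ n ∈ F, a n / n * (n : ℝ) ^ (-t) ≤ C * ((t + 2) / t) ^ β * exp (-(log 2 / 2) * t) := by
  -- half of `n ^ (-t)` becomes the decay `2 ^ (-t / 2)`, the other half moves `σ` to `1 + t / 2`
  have hsplit : ∀ n ∈ F, a n / n * (n : ℝ) ^ (-t) ≤
      exp (-(log 2 / 2) * t) * (a n * (n : ℝ) ^ (-(1 + t / 2))) := by
    intro n hn
    have hn2 : (2 : ℝ) ≤ n := by exact_mod_cast hF n hn
    have hn0 : (0 : ℝ) < n := by linarith
    have hdecay : (n : ℝ) ^ (-(t / 2)) ≤ exp (-(log 2 / 2) * t) := by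
      calc (n : ℝ) ^ (-(t / 2)) ≤ (2 : ℝ) ^ (-(t / 2)) :=
            rpow_le_rpow_of_nonpos two_pos hn2 (by linarith)
        _ = _ := by rw [rpow_def_of_pos two_pos]; ring_nf
    calc a n / n * (n : ℝ) ^ (-t) = (n : ℝ) ^ (-(t / 2)) * (a n * (n : ℝ) ^ (-(1 + t / 2))) := by
          rw [div_eq_mul_inv, ← rpow_neg_one, mul_assoc, ← rpow_add hn0, mul_left_comm,
            ← rpow_add hn0]
          ring_nf
      _ ≤ _ := by have := ha n; gcongr
  calc ∑ n ∈ F, a n / n * (n : ℝ) ^ (-t)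
      ≤ exp (-(log 2 / 2) * t) * ∑ n ∈ F, a n * (n : ℝ) ^ (-(1 + t / 2)) := by
        rw [mul_sum]
        exact sum_le_sum hsplit
    _ ≤ exp (-(log 2 / 2) * t) * (C * ((1 + t / 2) / (1 + t / 2 - 1)) ^ β) := by
        gcongr
        exact hbound _ (by linarith) F
    _ = _ := by
        rw [show (1 + t / 2) / (1 + t / 2 - 1) = (t + 2) / t by field_simp [ht.ne']; ring]
        ring

theorem summable_div_mul_log_pow_of_sum_rpow_neg_le {k : ℕ} (ha : ∀ n, 0 ≤ a n) (hβ : 0 ≤ β)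
    (hβk : β < k)
    (hbound : ∀ σ, 1 < σ → ∀ F : Finset ℕ,
      ∑ n ∈ F, a n * (n : ℝ) ^ (-σ) ≤ C * (σ / (σ - 1)) ^ β) :
    Summable fun n : ℕ => if 2 ≤ n then a n / (n * log n ^ k) else 0 := by
  have hk : (0 : ℝ) < k := hβ.trans_lt hβk
  set G := fun t : ℝ => t ^ ((k : ℝ) - 1) * (C * ((t + 2) / t) ^ β * exp (-(log 2 / 2) * t))
  have hG : IntegrableOn G (Set.Ioi 0) :=
    IntegrableOn.congr_fun ((integrableOn_rpow_mul_add_div_rpow_mul_exp hβ hβk zero_le_two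
      (div_pos (log_pos one_lt_two) two_pos)).const_mul C) (fun t _ => by simp only [G]; ring)
      measurableSet_Ioi
  refine summable_of_sum_le (c := (Gamma k)⁻¹ * ∫ t in Set.Ioi 0, G t) (fun n => ?_) fun u => ?_
  · dsimp only
    split_ifs with hn
    · have := ha n
      have : 0 < log n := log_pos (by exact_mod_cast hn)
      positivity
    · exact le_rfl
  rw [← sum_filter]
  set F := u.filter (2 ≤ ·)
  have hF : ∀ n ∈ F, 2 ≤ n := fun n hn => (mem_filter.mp hn).2
  have hmellin : ∀ n ∈ F, a n / (n * log n ^ k) =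
      (Gamma k)⁻¹ * ∫ t in Set.Ioi 0, t ^ ((k : ℝ) - 1) * (a n / n * (n : ℝ) ^ (-t)) := by
    intro n hn
    have hn1 : (1 : ℝ) < n := by exact_mod_cast hF n hn
    simp_rw [mul_left_comm _ (a n / n)]
    rw [integral_const_mul, integral_rpow_mul_rpow_neg hk hn1, rpow_natCast]
    field_simp [(Gamma_pos_of_pos hk).ne']
  have hint : ∀ n ∈ F, IntegrableOn
      (fun t : ℝ => t ^ ((k : ℝ) - 1) * (a n / n * (n : ℝ) ^ (-t))) (Set.Ioi 0) := fun n hn =>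
    IntegrableOn.congr_fun ((integrableOn_rpow_mul_rpow_neg (by linarith : -1 < (k : ℝ) - 1)
      (by exact_mod_cast hF n hn : (1 : ℝ) < n)).const_mul (a n / n)) (fun t _ => by ring)
      measurableSet_Ioi
  calc ∑ n ∈ F, a n / (n * log n ^ k)
      = (Gamma k)⁻¹ * ∫ t in Set.Ioi 0,
          ∑ n ∈ F, t ^ ((k : ℝ) - 1) * (a n / n * (n : ℝ) ^ (-t)) := by
        rw [sum_congr rfl hmellin, ← mul_sum, integral_finsetSum F hint]
    _ ≤ (Gamma k)⁻¹ * ∫ t in Set.Ioi 0, G t := by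
        refine mul_le_mul_of_nonneg_left (integral_mono_of_nonneg ?_ hG ?_)
          (inv_nonneg.mpr (Gamma_nonneg_of_nonneg hk.le))
        · refine (ae_restrict_iff' measurableSet_Ioi).mpr (.of_forall fun t ht => ?_)
          have ht : 0 < t := ht
          exact sum_nonneg fun n _ => by have := ha n; positivity
        · refine (ae_restrict_iff' measurableSet_Ioi).mpr (.of_forall fun t ht => ?_)
          have ht : 0 < t := ht
          simp only [G, ← mul_sum]
          exact mul_le_mul_of_nonneg_left (sum_div_mul_rpow_neg_le ha hbound hF ht) (by positivity)

end MellinCriterion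

/-- For every `1 < α < 2`, the series `∑_{n≥2} d(n) α^{Ω(n)} / (n (log n)⁴)`
converges, where `d(n)` is the number of divisors of `n` and `Ω(n)` the number
of prime factors of `n` counted with multiplicity. -/
theorem statement15 (α : ℝ) (h1 : 1 < α) (h2 : α < 2) :
    Summable (fun n : ℕ =>
      if 2 ≤ n then
        (n.divisors.card : ℝ) * α ^ (n.factorization.sum fun _ k => k) /
          ((n : ℝ) * Real.log (n : ℝ) ^ 4)
      else 0) := by
  have hα : 0 ≤ α := by linarith
  simp_rw [← ArithmeticFunction.cardFactors_eq_sum_factorization]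
  exact summable_div_mul_log_pow_of_sum_rpow_neg_le (fun n => by positivity) (by positivity)
    (by push_cast; linarith) fun σ hσ F =>
      sum_card_divisors_mul_pow_cardFactors_mul_rpow_neg_le hα h2 hσ F
end
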